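/- arXiv:2307.09111 — 3 statements merged into one kernel-verified Lean document; each statement's English description precedes it below -/
import Mathlib

section
/- If G is a graph on n nodes in which every node has even degree, with maximum degree Δ and strict majority thresholds, then every timed target set in the non-progressive threshold model has size at least 4n/(Δ+2). -/
open Finset
open scoped Classical

variable {V : Type*}

noncomputable def Qseq (G : SimpleGraph V) [Fintype V] (τ : V → ℕ) (S : ℕ → Finset V) :
    ℕ → Finset V
  | 0 => ∅
  | i + 1 => Finset.univ.filter fun v =>
      τ v ≤ (G.neighborFinset v ∩ (S i ∪ Qseq G τ S i)).card

def IsTTS (G : SimpleGraph V) [Fintype V] (τ : V → ℕ) (S : ℕ → Finset V) (k : ℕ) : Prop :=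
  S k = ∅ ∧ Qseq G τ S k = Finset.univ

def ttsSize (S : ℕ → Finset V) (k : ℕ) : ℕ := ∑ i ∈ Finset.range (k + 1), (S i).card

noncomputable def strictMaj (G : SimpleGraph V) [Fintype V] (v : V) : ℕ := (G.degree v + 2) / 2

noncomputable def npStep (G : SimpleGraph V) [Fintype V] (τ : V → ℕ) (A : Finset V) : Finset V :=
  Finset.univ.filter fun v => τ v ≤ (G.neighborFinset v ∩ A).card

def IsTS (G : SimpleGraph V) [Fintype V] (τ : V → ℕ) (S : Finset V) : Prop :=
  ∃ i : ℕ, (npStep G τ)^[i] S = Finset.univ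

noncomputable def MTT (G : SimpleGraph V) [Fintype V] (τ : V → ℕ) : ℕ :=
  sInf {m | ∃ (S : ℕ → Finset V) (k : ℕ), IsTTS G τ S k ∧ ttsSize S k = m}

/-!
Write `x_t ∈ {±1}^V` for the nodes active at time `t` (seeded or activated) and `A` for the
adjacency matrix. The energy `E(x, y) = 2·1ᵀx + 2·1ᵀy − xᵀAy` is symmetric, so
`E(x_{t+1}, x_t) − E(x_t, x_{t-1}) = ∑_v (x_{t+1} v − x_{t-1} v)(2 − (A x_t) v)`.
For an unseeded node, strict majority with even degree means `x_{t+1} v = 1` iff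
`(A x_t) v ≥ 2`, and `(A x_t) v ≤ 0` otherwise, so its term is `≤ 0`; a seed `u` contributes at
most `2(d(u) + 2)`. Telescoping from the empty configuration (`E = −4n − ∑ d`) to the
all-active one (`E ≥ 4n − ∑ d`, since every degree is at least `2`) gives
`8n ≤ 2 ∑_t ∑_{u ∈ S_t} (d(u) + 2) ≤ 2 · size · (Δ + 2)`.
-/

open Matrix

section Energy

variable [Fintype V]

noncomputable def signVec (B : Finset V) (v : V) : ℤ := if v ∈ B then 1 else -1

noncomputable def energy (G : SimpleGraph V) (x y : V → ℤ) : ℤ :=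
  2 * ∑ v, x v + 2 * ∑ v, y v - x ⬝ᵥ G.adjMatrix ℤ *ᵥ y

lemma energy_comm (G : SimpleGraph V) (x y : V → ℤ) : energy G x y = energy G y x := by
  have h : x ⬝ᵥ G.adjMatrix ℤ *ᵥ y = y ⬝ᵥ G.adjMatrix ℤ *ᵥ x := by
    rw [dotProduct_mulVec, ← mulVec_transpose, G.transpose_adjMatrix, dotProduct_comm]
  rw [energy, energy, h]
  ring

lemma energy_sub_energy_left (G : SimpleGraph V) (x x' y : V → ℤ) :
    energy G x' y - energy G x y = ∑ v, (x' v - x v) * (2 - (G.adjMatrix ℤ *ᵥ y) v) := by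
  simp only [energy, dotProduct, mul_sub, sub_mul, sum_sub_distrib, ← sum_mul]
  ring

lemma adjMatrix_mulVec_signVec (G : SimpleGraph V) (R : Finset V) (v : V) :
    (G.adjMatrix ℤ *ᵥ signVec R) v = 2 * #(G.neighborFinset v ∩ R) - G.degree v := by
  have h : ∀ w, signVec R w = 2 * (if w ∈ R then 1 else 0) - 1 := fun w => by
    unfold signVec; split_ifs <;> norm_num
  simp only [G.adjMatrix_mulVec_apply, h, sum_sub_distrib, ← mul_sum,
    sum_boole, filter_mem_eq_inter, sum_const, G.card_neighborFinset_eq_degree]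
  simp

lemma signVec_sub_mul_le (G : SimpleGraph V) {v : V} (hv : Even (G.degree v))
    {O R S : Finset V} :
    (signVec (S ∪ npStep G (strictMaj G) R) v - signVec O v) *
        (2 - (G.adjMatrix ℤ *ᵥ signVec R) v) ≤
      if v ∈ S then 2 * ((G.degree v : ℤ) + 2) else 0 := by
  obtain ⟨m, hm⟩ := hv
  have hc : #(G.neighborFinset v ∩ R) ≤ G.degree v :=
    G.card_neighborFinset_eq_degree v ▸ card_le_card inter_subset_left
  have hτ : strictMaj G v = m + 1 := by unfold strictMaj; omega
  rw [adjMatrix_mulVec_signVec]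
  by_cases hS : v ∈ S <;> by_cases hO : v ∈ O <;>
    by_cases hR : strictMaj G v ≤ #(G.neighborFinset v ∩ R) <;>
    simp [signVec, npStep, hS, hO, hR] <;> omega

lemma energy_sub_energy_le (G : SimpleGraph V) (heven : ∀ v, Even (G.degree v))
    (O R S : Finset V) :
    energy G (signVec (S ∪ npStep G (strictMaj G) R)) (signVec R) - energy G (signVec O) (signVec R)
      ≤ 2 * ∑ u ∈ S, ((G.degree u : ℤ) + 2) := by
  calc energy G (signVec (S ∪ npStep G (strictMaj G) R)) (signVec R)
        - energy G (signVec O) (signVec R)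
      ≤ ∑ v, if v ∈ S then 2 * ((G.degree v : ℤ) + 2) else 0 := by
        rw [energy_sub_energy_left]
        exact sum_le_sum fun v _ => signVec_sub_mul_le G (heven v)
    _ = 2 * ∑ u ∈ S, ((G.degree u : ℤ) + 2) := by
        rw [sum_ite_mem, univ_inter, mul_sum]

lemma energy_signVec_empty (G : SimpleGraph V) :
    energy G (signVec ∅) (signVec ∅) = -(4 * Fintype.card V + ∑ v, (G.degree v : ℤ)) := by
  have h : signVec (∅ : Finset V) = Function.const V (-1) := rfl
  simp only [energy, h, Function.const_apply, sum_neg_distrib, sum_const, card_univ, Int.nsmul_eq_mul,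
    mul_one, mul_neg, dotProduct, SimpleGraph.adjMatrix_mulVec_apply,
    SimpleGraph.card_neighborFinset_eq_degree, neg_mul, one_mul, neg_neg]
  ring

lemma energy_signVec_univ_ge (G : SimpleGraph V) (hdeg : ∀ v, 2 ≤ G.degree v) (R : Finset V) :
    4 * Fintype.card V - ∑ v, (G.degree v : ℤ) ≤ energy G (signVec univ) (signVec R) := by
  have h : signVec (univ : Finset V) = Function.const V 1 := funext fun v => if_pos (mem_univ v)
  have hpt : ∀ v ∈ (univ : Finset V), 2 - (G.degree v : ℤ) ≤ signVec R v * (2 - G.degree v) := by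
    intro v _
    have := hdeg v
    unfold signVec; split_ifs <;> omega
  rw [energy_comm]
  simp only [energy, h]
  have := sum_le_sum hpt
  simp only [sum_sub_distrib, sum_const, card_univ, Int.nsmul_eq_mul, mul_sub, ← sum_mul,
    Function.const_apply, mul_one, dotProduct, SimpleGraph.adjMatrix_mulVec_apply,
    SimpleGraph.card_neighborFinset_eq_degree] at this ⊢
  linarith

end Energy

noncomputable def activeBefore (G : SimpleGraph V) [Fintype V] (τ : V → ℕ) (S : ℕ → Finset V) :
    ℕ → Finset V
  | 0 => ∅
  | t + 1 => S t ∪ Qseq G τ S t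

section Dynamics

variable [Fintype V] {G : SimpleGraph V}

lemma npStep_empty {τ : V → ℕ} (hτ : ∀ v, 0 < τ v) : npStep G τ ∅ = ∅ := by
  simp [npStep, Nat.pos_iff_ne_zero.mp (hτ _)]

lemma activeBefore_succ {τ : V → ℕ} (hτ : ∀ v, 0 < τ v) (S : ℕ → Finset V) (t : ℕ) :
    activeBefore G τ S (t + 1) = S t ∪ npStep G τ (activeBefore G τ S t) := by
  cases t with
  | zero => simp [activeBefore, Qseq, npStep_empty hτ]
  | succ t => rfl

lemma strictMaj_pos (G : SimpleGraph V) (v : V) : 0 < strictMaj G v := by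
  unfold strictMaj; omega

lemma two_le_degree_of_mem_npStep {A : Finset V} {v : V} (hv : Even (G.degree v))
    (hmem : v ∈ npStep G (strictMaj G) A) : 2 ≤ G.degree v := by
  have hc : #(G.neighborFinset v ∩ A) ≤ G.degree v :=
    G.card_neighborFinset_eq_degree v ▸ card_le_card inter_subset_left
  have hτ := (mem_filter.mp hmem).2
  obtain ⟨m, hm⟩ := hv
  unfold strictMaj at hτ
  omega

lemma energy_activeBefore_le (heven : ∀ v, Even (G.degree v)) (S : ℕ → Finset V) (t : ℕ) :
    energy G (signVec (activeBefore G (strictMaj G) S (t + 1)))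
        (signVec (activeBefore G (strictMaj G) S t))
      ≤ energy G (signVec ∅) (signVec ∅)
        + 2 * ∑ i ∈ range (t + 1), ∑ u ∈ S i, ((G.degree u : ℤ) + 2) := by
  induction t with
  | zero =>
    have h := energy_sub_energy_le G heven ∅ ∅ (S 0)
    simp only [activeBefore, Qseq, npStep_empty (strictMaj_pos G), union_empty, zero_add,
      range_one, sum_singleton] at h ⊢
    linarith
  | succ t ih =>
    have h := energy_sub_energy_le G heven (activeBefore G (strictMaj G) S t)
      (activeBefore G (strictMaj G) S (t + 1)) (S (t + 1))
    rw [← activeBefore_succ (strictMaj_pos G),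
      energy_comm G (signVec (activeBefore G (strictMaj G) S t))] at h
    rw [sum_range_succ]
    linarith

end Dynamics

/-- Theorem 5: If every node of `G` has even degree and `τ` is the strict
majority threshold, then every timed target set has size at least `4n/(Δ+2)`,
i.e. `4n ≤ size ⬝ (Δ+2)`. -/
theorem stmt7 [Fintype V] (G : SimpleGraph V) (heven : ∀ v, Even (G.degree v))
    (S : ℕ → Finset V) (k : ℕ) (hS : IsTTS G (strictMaj G) S k) :
    4 * Fintype.card V ≤ ttsSize S k * (G.maxDegree + 2) := by
  obtain ⟨hSk, hQk⟩ := hS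
  set B := activeBefore G (strictMaj G) S
  have hfinal : npStep G (strictMaj G) (B k) = univ := by
    have h := activeBefore_succ (G := G) (strictMaj_pos G) S k
    simpa [B, activeBefore, hSk, hQk] using h.symm
  have hdeg : ∀ v, 2 ≤ G.degree v :=
    fun v => two_le_degree_of_mem_npStep (heven v) (hfinal ▸ mem_univ v)
  have hupper := energy_activeBefore_le heven S k
  rw [activeBefore_succ (strictMaj_pos G), hSk, empty_union, hfinal, energy_signVec_empty] at hupper
  have hlower := energy_signVec_univ_ge G hdeg (B k)
  have hweight : ∑ i ∈ range (k + 1), ∑ u ∈ S i, (G.degree u + 2)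
      ≤ ttsSize S k * (G.maxDegree + 2) := by
    rw [ttsSize, sum_mul]
    exact sum_le_sum fun i _ => (sum_le_card_nsmul _ _ _
      fun u _ => Nat.add_le_add_right (G.degree_le_maxDegree u) 2).trans_eq (smul_eq_mul _ _)
  zify at hweight ⊢
  linarith
end

section
/- For the complete bipartite graph K_{2,2ℓ} with strict majority thresholds, the sequence S_0=S_1={v_1,v_2}, S_2=∅ (where v_1,v_2 are the two nodes on the small side) is a timed target set of size 4, and hence the minimum timed target set size equals 4=4n/(Δ+2). -/
open Finset
open scoped Classical

variable {V : Type*}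

/-!
With all thresholds at least `m`, the potential `min m #(A_i ∩ left) + min m #(A_i ∩ right)` of the
active set `A_i = S_i ∪ Q_i` of `K_{α,β}` never exceeds the number of seeds used up to time `i`:
a side gains unseeded active vertices only when the other side already has `m` active vertices,
and then the other side's term is already `m`. As `Q_k = V` forces the potential at time `k - 1`
to be `2m`, every timed target set has size at least `2m`. For `K_{2,2ℓ}` with strict majority
all thresholds are at least `2`, and seeding `{v_1, v_2}` at times `0` and `1` attains `4`.
-/

lemma ttsSize_succ (S : ℕ → Finset V) (k : ℕ) : ttsSize S (k + 1) = ttsSize S k + #(S (k + 1)) :=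
  sum_range_succ _ _

lemma ttsSize_seed_twice (L : Finset V) : ttsSize (fun i => if i ≤ 1 then L else ∅) 2 = 2 * #L := by
  simp [ttsSize, sum_range_succ, two_mul]

section TimedTargetSet

variable [Fintype V] {G : SimpleGraph V} {τ : V → ℕ} {S : ℕ → Finset V}

noncomputable def activeSet (G : SimpleGraph V) (τ : V → ℕ) (S : ℕ → Finset V) (i : ℕ) :
    Finset V :=
  S i ∪ Qseq G τ S i

lemma mem_Qseq_succ {i : ℕ} {v : V} :
    v ∈ Qseq G τ S (i + 1) ↔ τ v ≤ #(G.neighborFinset v ∩ activeSet G τ S i) := by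
  simp [Qseq, activeSet]

lemma Qseq_succ_eq_univ {i : ℕ} (hτ : ∀ v, τ v ≤ G.degree v)
    (hA : activeSet G τ S i = univ) : Qseq G τ S (i + 1) = univ :=
  eq_univ_of_forall fun v => mem_Qseq_succ.2 <| by
    rw [hA, inter_univ, G.card_neighborFinset_eq_degree]
    exact hτ v

lemma MTT_eq_of_isTTS_of_forall_le {k m : ℕ} (h : IsTTS G τ S k) (hS : ttsSize S k = m)
    (hle : ∀ S' k', IsTTS G τ S' k' → m ≤ ttsSize S' k') : MTT G τ = m :=
  le_antisymm (Nat.sInf_le ⟨S, k, h, hS⟩) <|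
    le_csInf ⟨m, S, k, h, hS⟩ <| by
      rintro _ ⟨S', k', h', rfl⟩
      exact hle S' k' h'

lemma strictMaj_le_degree (G : SimpleGraph V) {v : V} (h : 2 ≤ G.degree v) :
    strictMaj G v ≤ G.degree v := by
  unfold strictMaj; omega

lemma two_le_strictMaj (G : SimpleGraph V) {v : V} (h : 2 ≤ G.degree v) :
    2 ≤ strictMaj G v := by
  unfold strictMaj; omega

end TimedTargetSet

namespace SimpleGraph

variable {α β : Type*} [Fintype α] [Fintype β]

lemma completeBipartiteGraph_neighborFinset_inl (a : α) :
    (completeBipartiteGraph α β).neighborFinset (.inl a) = univ.map .inr := by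
  ext (x | x) <;> simp

lemma completeBipartiteGraph_neighborFinset_inr (b : β) :
    (completeBipartiteGraph α β).neighborFinset (.inr b) = univ.map .inl := by
  ext (x | x) <;> simp

lemma completeBipartiteGraph_degree_inl (a : α) :
    (completeBipartiteGraph α β).degree (.inl a) = Fintype.card β := by
  rw [← card_neighborFinset_eq_degree, completeBipartiteGraph_neighborFinset_inl, card_map,
    card_univ]

lemma completeBipartiteGraph_degree_inr (b : β) :
    (completeBipartiteGraph α β).degree (.inr b) = Fintype.card α := by
  rw [← card_neighborFinset_eq_degree, completeBipartiteGraph_neighborFinset_inr, card_map,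
    card_univ]

lemma completeBipartiteGraph_maxDegree [Nonempty α] [Nonempty β] :
    (completeBipartiteGraph α β).maxDegree = max (Fintype.card α) (Fintype.card β) := by
  refine le_antisymm (maxDegree_le_of_forall_degree_le _ _ ?_) (max_le ?_ ?_)
  · rintro (a | b)
    · rw [completeBipartiteGraph_degree_inl]; exact le_max_right _ _
    · rw [completeBipartiteGraph_degree_inr]; exact le_max_left _ _
  · rw [← completeBipartiteGraph_degree_inr (Classical.arbitrary β)]
    exact degree_le_maxDegree _ _
  · rw [← completeBipartiteGraph_degree_inl (Classical.arbitrary α)]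
    exact degree_le_maxDegree _ _

end SimpleGraph

namespace CompleteBipartite

open SimpleGraph

variable {α β : Type*} [Fintype α] [Fintype β] {τ : α ⊕ β → ℕ} {S : ℕ → Finset (α ⊕ β)}
  {i : ℕ}

local notation "K" => completeBipartiteGraph α β

lemma mem_Qseq_succ_inl {a : α} :
    .inl a ∈ Qseq K τ S (i + 1) ↔ τ (.inl a) ≤ #(activeSet K τ S i).toRight := by
  rw [mem_Qseq_succ, ← card_map (.inr : β ↪ α ⊕ β)]
  congr! 2
  ext (x | x) <;> simp

lemma mem_Qseq_succ_inr {b : β} :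
    .inr b ∈ Qseq K τ S (i + 1) ↔ τ (.inr b) ≤ #(activeSet K τ S i).toLeft := by
  rw [mem_Qseq_succ, ← card_map (.inl : α ↪ α ⊕ β)]
  congr! 2
  ext (x | x) <;> simp

lemma isTTS_of_seed_left_twice (hτ : ∀ v, τ v ≤ degree K v)
    {L : Finset (α ⊕ β)} (hL : ∀ a, .inl a ∈ L) :
    IsTTS K τ (fun i => if i ≤ 1 then L else ∅) 2 := by
  refine ⟨rfl, Qseq_succ_eq_univ hτ (eq_univ_of_forall ?_)⟩
  rintro (a | b)
  · simp [activeSet, hL]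
  · simp only [activeSet, mem_union]
    refine .inr (mem_Qseq_succ_inr.2 ?_)
    calc τ (.inr b) ≤ Fintype.card α := by
          simpa only [completeBipartiteGraph_degree_inr] using hτ (.inr b)
      _ = #(univ : Finset α) := card_univ.symm
      _ ≤ _ := card_le_card fun a _ => by simp [activeSet, hL]

variable {m : ℕ}

lemma min_card_toLeft_activeSet_succ_le (hτ : ∀ v, m ≤ τ v) (i : ℕ) :
    min m #(activeSet K τ S (i + 1)).toLeft ≤
      min m #(activeSet K τ S i).toRight + #(S (i + 1)).toLeft := by
  by_cases h : m ≤ #(activeSet K τ S i).toRight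
  · omega
  · have hsub : (activeSet K τ S (i + 1)).toLeft ⊆ (S (i + 1)).toLeft := by
      intro a ha
      simp only [mem_toLeft, activeSet, mem_union] at ha ⊢
      exact ha.resolve_right fun hQ => h ((hτ _).trans (mem_Qseq_succ_inl.1 hQ))
    have := card_le_card hsub
    omega

lemma min_card_toRight_activeSet_succ_le (hτ : ∀ v, m ≤ τ v) (i : ℕ) :
    min m #(activeSet K τ S (i + 1)).toRight ≤
      min m #(activeSet K τ S i).toLeft + #(S (i + 1)).toRight := by
  by_cases h : m ≤ #(activeSet K τ S i).toLeft
  · omega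
  · have hsub : (activeSet K τ S (i + 1)).toRight ⊆ (S (i + 1)).toRight := by
      intro b hb
      simp only [mem_toRight, activeSet, mem_union] at hb ⊢
      exact hb.resolve_right fun hQ => h ((hτ _).trans (mem_Qseq_succ_inr.1 hQ))
    have := card_le_card hsub
    omega

lemma min_card_toLeft_add_min_card_toRight_le_ttsSize (hτ : ∀ v, m ≤ τ v) :
    ∀ i, min m #(activeSet K τ S i).toLeft + min m #(activeSet K τ S i).toRight ≤ ttsSize S i
  | 0 => by
    have hA : activeSet K τ S 0 = S 0 := by simp [activeSet, Qseq]
    have := card_toLeft_add_card_toRight (u := S 0)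
    rw [hA, ttsSize, sum_range_one]
    omega
  | i + 1 => by
    have := min_card_toLeft_activeSet_succ_le hτ (S := S) i
    have := min_card_toRight_activeSet_succ_le hτ (S := S) i
    have := min_card_toLeft_add_min_card_toRight_le_ttsSize hτ i
    have := card_toLeft_add_card_toRight (u := S (i + 1))
    rw [ttsSize_succ]
    omega

theorem two_mul_le_ttsSize_of_isTTS [Nonempty α] [Nonempty β] (hτ : ∀ v, m ≤ τ v) {k : ℕ}
    (h : IsTTS K τ S k) : 2 * m ≤ ttsSize S k := by
  obtain ⟨-, hQ⟩ := h
  cases k with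
  | zero => exact absurd hQ.symm univ_nonempty.ne_empty
  | succ j =>
    have ha : .inl (Classical.arbitrary α) ∈ Qseq K τ S (j + 1) := hQ ▸ mem_univ _
    have hb : .inr (Classical.arbitrary β) ∈ Qseq K τ S (j + 1) := hQ ▸ mem_univ _
    have := (hτ _).trans (mem_Qseq_succ_inl.1 ha)
    have := (hτ _).trans (mem_Qseq_succ_inr.1 hb)
    have := min_card_toLeft_add_min_card_toRight_le_ttsSize hτ (S := S) j
    rw [ttsSize_succ]
    omega

end CompleteBipartite

/-- tightness for even graphs: For `K_{2,2ℓ}` (`ℓ ≥ 1`) with strict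
majority thresholds, the sequence `S_0 = S_1 = {v_1, v_2}`, `S_2 = ∅` is a timed target
set of size 4, and the minimum timed target set size equals `4 = 4n/(Δ+2)`. -/
theorem stmt8 (l : ℕ) (hl : 1 ≤ l) :
    (IsTTS (completeBipartiteGraph (Fin 2) (Fin (2 * l)))
        (strictMaj (completeBipartiteGraph (Fin 2) (Fin (2 * l))))
        (fun i => if i ≤ 1 then {Sum.inl 0, Sum.inl 1} else ∅) 2
      ∧ ttsSize
          (fun i => if i ≤ 1 then ({Sum.inl 0, Sum.inl 1} : Finset (Fin 2 ⊕ Fin (2 * l)))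
            else ∅) 2 = 4)
    ∧ MTT (completeBipartiteGraph (Fin 2) (Fin (2 * l)))
        (strictMaj (completeBipartiteGraph (Fin 2) (Fin (2 * l)))) = 4
    ∧ 4 = 4 * Fintype.card (Fin 2 ⊕ Fin (2 * l)) /
        ((completeBipartiteGraph (Fin 2) (Fin (2 * l))).maxDegree + 2) := by
  have : Nonempty (Fin (2 * l)) := ⟨⟨0, by omega⟩⟩
  have hdeg (v) : 2 ≤ (completeBipartiteGraph (Fin 2) (Fin (2 * l))).degree v := by
    rcases v with a | b
    · rw [SimpleGraph.completeBipartiteGraph_degree_inl, Fintype.card_fin]; omega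
    · rw [SimpleGraph.completeBipartiteGraph_degree_inr, Fintype.card_fin]
  have hTTS := CompleteBipartite.isTTS_of_seed_left_twice
    (fun v => strictMaj_le_degree _ (hdeg v)) (L := {Sum.inl 0, Sum.inl 1})
    (fun a => by fin_cases a <;> simp)
  have hsize :=
    (ttsSize_seed_twice ({Sum.inl 0, Sum.inl 1} : Finset (Fin 2 ⊕ Fin (2 * l)))).trans
      (by rw [card_pair (by simp)])
  refine ⟨⟨hTTS, hsize⟩, MTT_eq_of_isTTS_of_forall_le hTTS hsize fun _ _ h =>
    CompleteBipartite.two_mul_le_ttsSize_of_isTTS (fun v => two_le_strictMaj _ (hdeg v)) h, ?_⟩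
  rw [SimpleGraph.completeBipartiteGraph_maxDegree, Fintype.card_sum, Fintype.card_fin,
    Fintype.card_fin, max_eq_right (by omega), add_comm 2, Nat.mul_div_cancel _ (by omega)]
end

section
/- Given a graph H with threshold assignment τ', construct G by attaching, to each node v of H, ⌈d_H(v)/2⌉ disjoint copies of K_2 with both nodes of each copy adjacent to v; set τ=τ' on V(H) and τ=1 on the new nodes. Then the minimum size of a target set for (H,τ') in the progressive model equals the minimum size of a timed target set for (G,τ) in the non-progressive model. -/
open Finset
open scoped Classical

variable {V : Type*}

/-- One step of the progressive threshold model: positive nodes stay positive, and a node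
becomes positive if at least `τ(v)` of its neighbors are positive. -/
noncomputable def pStep (H : SimpleGraph V) [Fintype V] (τ : V → ℕ) (A : Finset V) :
    Finset V :=
  A ∪ Finset.univ.filter fun v => τ v ≤ (H.neighborFinset v ∩ A).card

/-- A target set in the progressive threshold model. -/
def IsPTS (H : SimpleGraph V) [Fintype V] (τ : V → ℕ) (S : Finset V) : Prop :=
  ∃ i : ℕ, (pStep H τ)^[i] S = Finset.univ

/-- Vertex type of the gadget graph: the vertices of `H` together with, for each `v`,
`⌈d(v)/2⌉` copies of `K_2` (a copy index below `⌈d(v)/2⌉` and a `Fin 2` component). -/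
def gadgetV (H : SimpleGraph V) [Fintype V] : Type _ :=
  V ⊕ {p : V × Fin (H.maxDegree + 1) × Fin 2 // (p.2.1 : ℕ) < (H.degree p.1 + 1) / 2}

noncomputable instance (H : SimpleGraph V) [Fintype V] : Fintype (gadgetV H) := by
  unfold gadgetV; infer_instance

/-- Adjacency of the gadget graph: `H`-edges between original vertices, each gadget vertex
is adjacent to the original vertex it is attached to, and the two vertices of each copy of
`K_2` are adjacent to each other. -/
def gadgetAdj (H : SimpleGraph V) [Fintype V] : gadgetV H → gadgetV H → Prop
  | Sum.inl a, Sum.inl b => H.Adj a b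
  | Sum.inl a, Sum.inr p => a = p.1.1
  | Sum.inr p, Sum.inl a => a = p.1.1
  | Sum.inr p, Sum.inr q => p.1.1 = q.1.1 ∧ p.1.2.1 = q.1.2.1 ∧ p.1.2.2 ≠ q.1.2.2

/-- The gadget graph `G` obtained from `H` by attaching `⌈d(v)/2⌉` copies of `K_2` to each
node `v`, with both nodes of each copy adjacent to `v`. -/
def gadgetGraph (H : SimpleGraph V) [Fintype V] : SimpleGraph (gadgetV H) where
  Adj := gadgetAdj H
  symm := by
    constructor
    intro a b h
    match a, b, h with
    | Sum.inl a, Sum.inl b, h => exact H.adj_symm h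
    | Sum.inl a, Sum.inr p, h => exact h
    | Sum.inr p, Sum.inl a, h => exact h
    | Sum.inr p, Sum.inr q, h => exact ⟨h.1.symm, h.2.1.symm, h.2.2.symm⟩
  loopless := by
    constructor
    intro a h
    match a, h with
    | Sum.inl a, h => exact H.irrefl h
    | Sum.inr p, h => exact h.2.2 rfl


/-! Let `π : V(G) → V(H)` send each gadget node to the vertex it is attached to. If all of
`π⁻¹ P` is positive, it stays positive in the non-progressive process on `G`: a gadget node
sees its base vertex, and a base vertex `v` sees `2 ⌈d(v)/2⌉ ≥ d(v) ≥ τ'(v)` positive gadget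
nodes. Two more steps then make `π⁻¹ (pStep P)` positive, so seeding a progressive target set
`S` at time `0` (which makes `π⁻¹ S` positive after two steps) is a timed target set of the
same size. Conversely, if every positive or seeded node at time `i` projects into the `i`-th
progressive iterate of `π(seeds)`, the same holds at time `i + 1`: a vertex of `H` that turns
positive without a positive gadget node of its own has `τ'` positive `H`-neighbours. -/

lemma ttsSize_initial_seed {W : Type*} (A : Finset W) (k : ℕ) :
    ttsSize (fun j => if j = 0 then A else ∅) k = A.card := by
  rw [ttsSize, sum_eq_single_of_mem 0 (mem_range.2 k.succ_pos)
    fun i _ hi => by rw [if_neg hi, card_empty]]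
  rfl

lemma Nat.sInf_eq_of_subset_of_forall_exists_le {A B : Set ℕ} (hAB : A ⊆ B)
    (hBA : ∀ b ∈ B, ∃ a ∈ A, a ≤ b) : sInf A = sInf B := by
  rcases B.eq_empty_or_nonempty with rfl | hB
  · rw [Set.subset_empty_iff.1 hAB]
  obtain ⟨a, ha, hab⟩ := hBA _ (Nat.sInf_mem hB)
  exact le_antisymm ((Nat.sInf_le ha).trans hab)
    (csInf_le_csInf (OrderBot.bddBelow B) ⟨a, ha⟩ hAB)

section Dynamics

variable {W : Type*} [Fintype W] (G : SimpleGraph W) (τ : W → ℕ)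

lemma mem_npStep {A : Finset W} {x : W} :
    x ∈ npStep G τ A ↔ τ x ≤ (G.neighborFinset x ∩ A).card := by
  simp [npStep]

variable {G τ}

lemma mem_npStep_of_le_card {A B : Finset W} {x : W} (hB : ∀ y ∈ B, G.Adj x y ∧ y ∈ A)
    (h : τ x ≤ B.card) : x ∈ npStep G τ A :=
  (mem_npStep G τ).2 <| h.trans <| card_le_card fun y hy =>
    mem_inter.2 ⟨(G.mem_neighborFinset x y).2 (hB y hy).1, (hB y hy).2⟩

lemma le_card_of_mem_npStep {A B : Finset W} {x : W} (hx : x ∈ npStep G τ A)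
    (hB : ∀ y ∈ A, G.Adj x y → y ∈ B) : τ x ≤ B.card :=
  ((mem_npStep G τ).1 hx).trans <| card_le_card fun y hy =>
    hB y (mem_inter.1 hy).2 ((G.mem_neighborFinset x y).1 (mem_inter.1 hy).1)

lemma exists_adj_mem_of_mem_npStep {A : Finset W} {x : W} (hx : x ∈ npStep G τ A)
    (hτ : τ x ≠ 0) : ∃ y ∈ A, G.Adj x y := by
  obtain ⟨y, hy⟩ := card_pos.1 (Nat.pos_of_ne_zero hτ |>.trans_le ((mem_npStep G τ).1 hx))
  exact ⟨y, (mem_inter.1 hy).2, (G.mem_neighborFinset x y).1 (mem_inter.1 hy).1⟩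

lemma npStep_mono : Monotone (npStep G τ) := fun _ _ hAB _ hx =>
  mem_npStep_of_le_card (B := G.neighborFinset _ ∩ _)
    (fun y hy => ⟨(G.mem_neighborFinset _ y).1 (mem_inter.1 hy).1, hAB (mem_inter.1 hy).2⟩)
    ((mem_npStep G τ).1 hx)

lemma Qseq_succ (S : ℕ → Finset W) (i : ℕ) :
    Qseq G τ S (i + 1) = npStep G τ (S i ∪ Qseq G τ S i) := by
  rw [Qseq, npStep]

lemma Qseq_succ_subset {S : ℕ → Finset W} {i : ℕ} {B : Finset W} (hS : S i ⊆ B)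
    (hQ : Qseq G τ S i ⊆ B) : Qseq G τ S (i + 1) ⊆ npStep G τ B :=
  (Qseq_succ S i).subset.trans (npStep_mono (union_subset hS hQ))

lemma Qseq_initial_seed (A : Finset W) (i : ℕ) :
    Qseq G τ (fun j => if j = 0 then A else ∅) (i + 1) = (npStep G τ)^[i + 1] A := by
  induction i with
  | zero => simp [Qseq, npStep]
  | succ i ih =>
    rw [Qseq_succ, ih, if_neg (Nat.succ_ne_zero i), empty_union,
      Function.iterate_succ_apply' _ (i + 1)]

lemma subset_pStep (A : Finset W) : A ⊆ pStep G τ A := subset_union_left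

lemma mem_pStep_of_le_card {A : Finset W} {x : W} (h : τ x ≤ (G.neighborFinset x ∩ A).card) :
    x ∈ pStep G τ A :=
  mem_union_right _ (mem_filter.2 ⟨mem_univ x, h⟩)

lemma monotone_iterate_pStep (S : Finset W) : Monotone fun i => (pStep G τ)^[i] S :=
  monotone_nat_of_le_succ fun i => by
    simp only [Function.iterate_succ_apply']
    exact subset_pStep _

end Dynamics

section Gadget

variable [Fintype V] (H : SimpleGraph V)

abbrev GadgetNode : Type _ :=
  {p : V × Fin (H.maxDegree + 1) × Fin 2 // (p.2.1 : ℕ) < (H.degree p.1 + 1) / 2}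

def gadgetProj : gadgetV H → V := Sum.elim id fun p => p.1.1

noncomputable def gadgetPreimage (P : Finset V) : Finset (gadgetV H) :=
  univ.filter fun x => gadgetProj H x ∈ P

/-- `Sum.elim τ' fun _ => 1`, but typed on `gadgetV H`: with the unfolded sum type as domain,
`rw` fails to produce type-correct motives for `npStep` and `Qseq`. -/
def gadgetThreshold (τ' : V → ℕ) : gadgetV H → ℕ := Sum.elim τ' fun _ => 1

variable {H}

def GadgetNode.partner (p : GadgetNode H) : GadgetNode H := ⟨(p.1.1, p.1.2.1, p.1.2.2 + 1), p.2⟩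

lemma mem_gadgetPreimage {P : Finset V} {x : gadgetV H} :
    x ∈ gadgetPreimage H P ↔ gadgetProj H x ∈ P := by
  simp [gadgetPreimage]

lemma gadgetPreimage_univ : gadgetPreimage H univ = univ := by
  simp [gadgetPreimage]

lemma gadgetPreimage_mono : Monotone (gadgetPreimage H) := fun _ _ hPQ _ hx =>
  mem_gadgetPreimage.2 (hPQ (mem_gadgetPreimage.1 hx))

lemma gadgetGraph_adj_partner (p : GadgetNode H) :
    (gadgetGraph H).Adj (Sum.inr p) (Sum.inr p.partner) :=
  ⟨rfl, rfl, by
    have : ∀ b : Fin 2, b ≠ b + 1 := by decide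
    exact this _⟩

lemma gadgetProj_eq_of_adj_inr {p : GadgetNode H} {y : gadgetV H}
    (h : (gadgetGraph H).Adj (Sum.inr p) y) : gadgetProj H y = p.1.1 := by
  cases y with
  | inl a => exact h
  | inr q => exact h.1.symm

lemma degree_le_card_gadgetNodes (v : V) :
    H.degree v ≤ (univ.filter fun p : GadgetNode H => p.1.1 = v).card := by
  set m := (H.degree v + 1) / 2
  have hm : ∀ j : Fin m, (j : ℕ) < H.maxDegree + 1 := fun j => by
    have := H.degree_le_maxDegree v; omega
  let f : Fin m × Fin 2 ↪ GadgetNode H :=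
    ⟨fun x => ⟨(v, ⟨x.1, hm x.1⟩, x.2), x.1.2⟩, fun a b hab => by
      have h := Subtype.ext_iff.1 hab
      simp only [Prod.mk.injEq, Fin.mk.injEq] at h
      exact Prod.ext (Fin.ext h.2.1) h.2.2⟩
  have hcard : (univ.map f).card ≤ (univ.filter fun p : GadgetNode H => p.1.1 = v).card :=
    card_le_card fun x hx => by
      obtain ⟨y, -, rfl⟩ := mem_map.1 hx
      exact mem_filter.2 ⟨mem_univ _, rfl⟩
  simp only [card_map, card_univ, Fintype.card_prod, Fintype.card_fin] at hcard
  omega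

variable {τ' : V → ℕ}

lemma inr_mem_npStep_of_adj {A : Finset (gadgetV H)} {p : GadgetNode H} {y : gadgetV H}
    (hy : (gadgetGraph H).Adj (Sum.inr p) y) (hyA : y ∈ A) :
    Sum.inr p ∈ npStep (gadgetGraph H) (gadgetThreshold H τ') A :=
  mem_npStep_of_le_card (B := {y}) (by simpa using ⟨hy, hyA⟩) (card_singleton y).ge

lemma inl_mem_npStep_of_gadgets_mem (hτ' : ∀ v, τ' v ≤ H.degree v) {A : Finset (gadgetV H)}
    {v : V} (h : ∀ p : GadgetNode H, p.1.1 = v → (Sum.inr p : gadgetV H) ∈ A) :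
    Sum.inl v ∈ npStep (gadgetGraph H) (gadgetThreshold H τ') A := by
  refine mem_npStep_of_le_card
    (B := (univ.filter fun p : GadgetNode H => p.1.1 = v).map Function.Embedding.inr)
    (fun y hy => ?_) ((hτ' v).trans ((degree_le_card_gadgetNodes v).trans (card_map _).ge))
  obtain ⟨p, hp, rfl⟩ := mem_map.1 hy
  have hpv : p.1.1 = v := (mem_filter.1 hp).2
  exact ⟨hpv.symm, h p hpv⟩

lemma inl_mem_npStep_of_le_card {A : Finset (gadgetV H)} {P : Finset V} {v : V}
    (hv : τ' v ≤ (H.neighborFinset v ∩ P).card)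
    (hPA : ∀ u ∈ P, (Sum.inl u : gadgetV H) ∈ A) :
    Sum.inl v ∈ npStep (gadgetGraph H) (gadgetThreshold H τ') A := by
  refine mem_npStep_of_le_card (B := (H.neighborFinset v ∩ P).map Function.Embedding.inl)
    (fun y hy => ?_) (hv.trans (card_map _).ge)
  obtain ⟨u, hu, rfl⟩ := mem_map.1 hy
  obtain ⟨huv, huP⟩ := mem_inter.1 hu
  exact ⟨(H.mem_neighborFinset v u).1 huv, hPA u huP⟩

lemma gadgetPreimage_subset_npStep (hτ' : ∀ v, τ' v ≤ H.degree v) {A : Finset (gadgetV H)}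
    {P : Finset V} (h : ∀ p : GadgetNode H, p.1.1 ∈ P → (Sum.inr p : gadgetV H) ∈ A) :
    gadgetPreimage H P ⊆ npStep (gadgetGraph H) (gadgetThreshold H τ') A := by
  intro x hx
  rw [mem_gadgetPreimage] at hx
  cases x with
  | inl v => exact inl_mem_npStep_of_gadgets_mem hτ' fun p hp => h p (hp ▸ hx)
  | inr p => exact inr_mem_npStep_of_adj (gadgetGraph_adj_partner p) (h _ hx)

lemma inl_mem_npStep_of_mem_pStep (hτ' : ∀ v, τ' v ≤ H.degree v) {A : Finset (gadgetV H)}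
    {P : Finset V} (hPA : gadgetPreimage H P ⊆ A) {v : V} (hv : v ∈ pStep H τ' P) :
    Sum.inl v ∈ npStep (gadgetGraph H) (gadgetThreshold H τ') A := by
  rcases mem_union.1 hv with hv | hv
  · exact gadgetPreimage_subset_npStep hτ' (fun p hp => hPA (mem_gadgetPreimage.2 hp))
      (mem_gadgetPreimage.2 hv)
  · exact inl_mem_npStep_of_le_card (mem_filter.1 hv).2 fun u hu =>
      hPA (mem_gadgetPreimage.2 hu)

lemma gadgetPreimage_pStep_subset (hτ' : ∀ v, τ' v ≤ H.degree v) {A : Finset (gadgetV H)}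
    {P : Finset V} (hPA : gadgetPreimage H P ⊆ A) :
    gadgetPreimage H (pStep H τ' P) ⊆ (npStep (gadgetGraph H) (gadgetThreshold H τ'))^[2] A := by
  have hPB := gadgetPreimage_subset_npStep (τ' := τ') hτ' fun p hp =>
    hPA (mem_gadgetPreimage.2 hp)
  intro x hx
  rw [mem_gadgetPreimage] at hx
  cases x with
  | inl v => exact inl_mem_npStep_of_mem_pStep hτ' hPB hx
  | inr p =>
    exact inr_mem_npStep_of_adj (y := Sum.inl p.1.1) rfl (inl_mem_npStep_of_mem_pStep hτ' hPA hx)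

lemma gadgetPreimage_subset_npStep_map_inl (hτ' : ∀ v, τ' v ≤ H.degree v) (S : Finset V) :
    gadgetPreimage H S ⊆
      (npStep (gadgetGraph H) (gadgetThreshold H τ'))^[2] (S.map Function.Embedding.inl) :=
  gadgetPreimage_subset_npStep hτ' fun p hp =>
    inr_mem_npStep_of_adj (y := Sum.inl p.1.1) rfl (mem_map_of_mem _ hp)

lemma npStep_subset_gadgetPreimage_pStep {A : Finset (gadgetV H)} {P : Finset V}
    (hAP : A ⊆ gadgetPreimage H P) :
    npStep (gadgetGraph H) (gadgetThreshold H τ') A ⊆ gadgetPreimage H (pStep H τ' P) := by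
  intro x hx
  rw [mem_gadgetPreimage]
  cases x with
  | inr p =>
    obtain ⟨y, hyA, hy⟩ := exists_adj_mem_of_mem_npStep hx one_ne_zero
    have hyP := mem_gadgetPreimage.1 (hAP hyA)
    rw [gadgetProj_eq_of_adj_inr hy] at hyP
    exact subset_pStep _ hyP
  | inl w =>
    by_cases hg : ∃ p : GadgetNode H, p.1.1 = w ∧ (Sum.inr p : gadgetV H) ∈ A
    · obtain ⟨p, rfl, hpA⟩ := hg
      have hpP := mem_gadgetPreimage.1 (hAP hpA)
      exact subset_pStep _ hpP
    push Not at hg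
    refine mem_pStep_of_le_card ((le_card_of_mem_npStep hx fun y hyA hy => ?_).trans
      (card_map Function.Embedding.inl).le)
    cases y with
    | inl u => exact mem_map_of_mem _ (mem_inter.2
        ⟨(H.mem_neighborFinset w u).2 hy, mem_gadgetPreimage.1 (hAP hyA)⟩)
    | inr p => exact absurd hyA (hg p (Eq.symm hy))

theorem exists_isTTS_of_isPTS (hτ' : ∀ v, τ' v ≤ H.degree v) {S : Finset V}
    (hS : IsPTS H τ' S) :
    ∃ (T : ℕ → Finset (gadgetV H)) (k : ℕ),
      IsTTS (gadgetGraph H) (gadgetThreshold H τ') T k ∧ ttsSize T k = S.card := by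
  obtain ⟨t, ht⟩ := hS
  have key : ∀ j, gadgetPreimage H ((pStep H τ')^[j] S) ⊆
      (npStep (gadgetGraph H) (gadgetThreshold H τ'))^[2 * j + 2]
        (S.map Function.Embedding.inl) := by
    intro j
    induction j with
    | zero => exact gadgetPreimage_subset_npStep_map_inl hτ' S
    | succ j ih =>
      rw [Function.iterate_succ_apply', show 2 * (j + 1) + 2 = 2 + (2 * j + 2) by ring,
        Function.iterate_add_apply]
      exact gadgetPreimage_pStep_subset hτ' ih
  refine ⟨fun j => if j = 0 then S.map Function.Embedding.inl else ∅, 2 * t + 2,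
    ⟨if_neg (by omega), ?_⟩, (ttsSize_initial_seed _ _).trans (card_map _)⟩
  rw [Qseq_initial_seed, ← univ_subset_iff, ← gadgetPreimage_univ, ← ht]
  exact key t

theorem exists_isPTS_card_le_ttsSize {T : ℕ → Finset (gadgetV H)} {k : ℕ}
    (h : IsTTS (gadgetGraph H) (gadgetThreshold H τ') T k) :
    ∃ S : Finset V, IsPTS H τ' S ∧ S.card ≤ ttsSize T k := by
  set S := (range (k + 1)).biUnion fun i => (T i).image (gadgetProj H)
  have hT : ∀ i ≤ k, T i ⊆ gadgetPreimage H S := fun i hi x hx =>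
    mem_gadgetPreimage.2 (mem_biUnion.2 ⟨i, mem_range.2 (by omega), mem_image_of_mem _ hx⟩)
  have hQ : ∀ i ≤ k, Qseq (gadgetGraph H) (gadgetThreshold H τ') T i ⊆
      gadgetPreimage H ((pStep H τ')^[i] S) := by
    intro i
    induction i with
    | zero => simp [Qseq]
    | succ i ih =>
      intro hi
      rw [Function.iterate_succ_apply']
      refine (Qseq_succ_subset ?_ (ih (by omega))).trans
        (npStep_subset_gadgetPreimage_pStep le_rfl)
      exact (hT i (by omega)).trans
        (gadgetPreimage_mono (monotone_iterate_pStep S (Nat.zero_le i)))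
  refine ⟨S, ⟨k, eq_univ_of_forall fun v => ?_⟩, ?_⟩
  · exact mem_gadgetPreimage.1 (hQ k le_rfl (h.2 ▸ mem_univ (Sum.inl v : gadgetV H)))
  · calc S.card ≤ ∑ i ∈ range (k + 1), ((T i).image (gadgetProj H)).card := card_biUnion_le
      _ ≤ ttsSize T k := sum_le_sum fun i _ => card_image_le

end Gadget

/-- reduction in Theorem 6: For a graph `H` with threshold assignment
`τ'`, the minimum size of a target set for `(H, τ')` in the progressive model equals the
minimum size of a timed target set in the non-progressive model for the gadget graph `G`
(thresholds: `τ'` on `V(H)` and `1` on the new nodes). -/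
theorem stmt16 [Fintype V] (H : SimpleGraph V) (τ' : V → ℕ)
    (hτ' : ∀ v, τ' v ≤ H.degree v) :
    sInf {m | ∃ S : Finset V, IsPTS H τ' S ∧ S.card = m} =
      MTT (gadgetGraph H) (Sum.elim τ' fun _ => 1) := by
  refine Nat.sInf_eq_of_subset_of_forall_exists_le ?_ ?_
  · rintro _ ⟨S, hS, rfl⟩
    exact exists_isTTS_of_isPTS hτ' hS
  · rintro _ ⟨T, k, hT, rfl⟩
    obtain ⟨S, hS, hcard⟩ := exists_isPTS_card_le_ttsSize hT
    exact ⟨S.card, ⟨S, hS, rfl⟩, hcard⟩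
end
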